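/- arXiv:2508.17396 — 2 statements merged into one kernel-verified Lean document; each statement's English description precedes it below -/
import Mathlib

section
/- On ℝ⁴ with coordinates (s, x, y, z), let λ = e^s α₊ + e^{−s} α₋ where α₊ = e^z dx + e^{−z} dy and α₋ = −e^z dx + e^{−z} dy are 1-forms on ℝ³ (pulled back to ℝ⁴). Then dλ is a symplectic form on ℝ⁴, i.e. dλ ∧ dλ is nowhere vanishing. -/
/- STATEMENT 7: On ℝ⁴ with coordinates `p = (s, x, y, z)` (so tangent vectors are
`v = (vs, vx, vy, vz)`), let `λ = e^s α₊ + e^{-s} α₋` with `α₊ = e^z dx + e^{-z} dy`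
and `α₋ = -e^z dx + e^{-z} dy`.  Then `dλ` is symplectic: the 4-form `dλ ∧ dλ` is
nowhere vanishing.  Here `dλ(u,v) = D_u(λ(·)(v)) - D_v(λ(·)(u))` and, on a
4-manifold, `(dλ ∧ dλ)(e₀,e₁,e₂,e₃) =
2 (dλ(e₀,e₁)dλ(e₂,e₃) - dλ(e₀,e₂)dλ(e₁,e₃) + dλ(e₀,e₃)dλ(e₁,e₂))` on the standard
basis, so nowhere-vanishing means this value is nonzero at every point. -/

noncomputable section

abbrev P4 : Type := ℝ × ℝ × ℝ × ℝ

/-- `α₊ = e^z dx + e^{-z} dy` (pulled back to ℝ⁴). -/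
def alphaP (p v : P4) : ℝ := Real.exp p.2.2.2 * v.2.1 + Real.exp (-p.2.2.2) * v.2.2.1

/-- `α₋ = -e^z dx + e^{-z} dy` (pulled back to ℝ⁴). -/
def alphaM (p v : P4) : ℝ :=
  -(Real.exp p.2.2.2 * v.2.1) + Real.exp (-p.2.2.2) * v.2.2.1

/-- `λ = e^s α₊ + e^{-s} α₋`. -/
def lamF (p v : P4) : ℝ := Real.exp p.1 * alphaP p v + Real.exp (-p.1) * alphaM p v

/-- `dλ(u,v)` at `p`. -/
def dlam (p u v : P4) : ℝ :=
  fderiv ℝ (fun q => lamF q v) p u - fderiv ℝ (fun q => lamF q u) p v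

def e0 : P4 := (1, 0, 0, 0)
def e1 : P4 := (0, 1, 0, 0)
def e2 : P4 := (0, 0, 1, 0)
def e3 : P4 := (0, 0, 0, 1)

/-! Rewriting `λ = 2 sinh s · e^z dx + 2 cosh s · e^{-z} dy`, the only nonzero components of `dλ`
are `dλ(∂s,∂x) = 2 cosh s · e^z`, `dλ(∂y,∂z) = 2 cosh s · e^{-z}`, `dλ(∂s,∂y) = 2 sinh s · e^{-z}` and
`dλ(∂x,∂z) = -2 sinh s · e^z`, so `dλ ∧ dλ = 8 (cosh² s + sinh² s) = 8 cosh 2s > 0`. -/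

open Real

lemma lamF_eq (p v : P4) :
    lamF p v = 2 * (sinh p.1 * exp p.2.2.2 * v.2.1 + cosh p.1 * exp (-p.2.2.2) * v.2.2.1) := by
  simp only [lamF, alphaP, alphaM, sinh_eq, cosh_eq]
  ring

lemma fderiv_lamF_apply (p u v : P4) :
    fderiv ℝ (fun q => lamF q v) p u =
      2 * ((cosh p.1 * u.1 + sinh p.1 * u.2.2.2) * exp p.2.2.2 * v.2.1
        + (sinh p.1 * u.1 - cosh p.1 * u.2.2.2) * exp (-p.2.2.2) * v.2.2.1) := by
  have hs : HasFDerivAt (fun q : P4 => q.1) (ContinuousLinearMap.fst ℝ ℝ _) p := hasFDerivAt_fst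
  have hz : HasFDerivAt (fun q : P4 => q.2.2.2)
      ((ContinuousLinearMap.snd ℝ ℝ ℝ).comp ((ContinuousLinearMap.snd ℝ ℝ _).comp
        (ContinuousLinearMap.snd ℝ ℝ _))) p :=
    hasFDerivAt_snd.comp p (hasFDerivAt_snd.comp p hasFDerivAt_snd)
  have h : HasFDerivAt (fun q : P4 =>
      2 * (sinh q.1 * exp q.2.2.2 * v.2.1 + cosh q.1 * exp (-q.2.2.2) * v.2.2.1)) _ p :=
    (((hs.sinh.mul hz.exp).mul_const v.2.1).add
      ((hs.cosh.mul hz.neg.exp).mul_const v.2.2.1)).const_mul 2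
  simp only [lamF_eq]
  rw [h.fderiv]
  simp only [smul_add, Pi.neg_apply, smul_neg, add_apply, smul_apply, ContinuousLinearMap.comp_apply,
    ContinuousLinearMap.coe_snd', smul_eq_mul, ContinuousLinearMap.coe_fst', neg_apply]
  ring

lemma dlam_eq (p u v : P4) :
    dlam p u v =
      2 * (exp p.2.2.2 * (cosh p.1 * (u.1 * v.2.1 - v.1 * u.2.1)
          + sinh p.1 * (u.2.2.2 * v.2.1 - v.2.2.2 * u.2.1))
        + exp (-p.2.2.2) * (sinh p.1 * (u.1 * v.2.2.1 - v.1 * u.2.2.1)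
          - cosh p.1 * (u.2.2.2 * v.2.2.1 - v.2.2.2 * u.2.2.1))) := by
  rw [dlam, fderiv_lamF_apply, fderiv_lamF_apply]
  ring

lemma dlam_wedge_dlam_eq (p : P4) :
    2 * (dlam p e0 e1 * dlam p e2 e3 - dlam p e0 e2 * dlam p e1 e3
      + dlam p e0 e3 * dlam p e1 e2) = 8 * cosh (2 * p.1) := by
  have hexp : exp p.2.2.2 * exp (-p.2.2.2) = 1 := by rw [← exp_add, add_neg_cancel, exp_zero]
  simp only [dlam_eq, e0, e1, e2, e3, cosh_two_mul]
  linear_combination (8 * (cosh p.1 ^ 2 + sinh p.1 ^ 2)) * hexp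

theorem stmt7 :
    ∀ p : P4,
      2 * (dlam p e0 e1 * dlam p e2 e3 - dlam p e0 e2 * dlam p e1 e3
        + dlam p e0 e3 * dlam p e1 e2) ≠ 0 := by
  intro p
  rw [dlam_wedge_dlam_eq]
  positivity

end
end

section
/- On ℝ⁴ with coordinates (s, x, y, z), let λ' = e^s α₊ − e^{−s} α₋ where α₊ = e^z dx + e^{−z} dy and α₋ = −e^z dx + e^{−z} dy. Then dλ' is symplectic; combined with the symplecticity of d(e^s α₊ + e^{−s} α₋), this shows (α₊, α₋) is an Anosov-Liouville pair on ℝ³. -/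
/- STATEMENT 8: With `α₊ = e^z dx + e^{-z} dy` and `α₋ = -e^z dx + e^{-z} dy` on ℝ³
(pulled back to ℝ⁴ with coordinates `(s,x,y,z)`), the form `λ' = e^s α₊ - e^{-s} α₋`
has symplectic differential; combined with the symplecticity of
`d(e^s α₊ + e^{-s} α₋)` this shows `(α₊, α₋)` is an Anosov-Liouville pair.
Conventions for `dλ` and for evaluating the 4-form `dλ ∧ dλ` on the standard basis
are as in Statement 7. -/

noncomputable section

/-- `λ' = e^s α₊ - e^{-s} α₋`. -/
def lamF' (p v : P4) : ℝ := Real.exp p.1 * alphaP p v - Real.exp (-p.1) * alphaM p v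

def dOf (β : P4 → P4 → ℝ) (p u v : P4) : ℝ :=
  fderiv ℝ (fun q => β q v) p u - fderiv ℝ (fun q => β q u) p v

def wedgeSq (β : P4 → P4 → ℝ) (p : P4) : ℝ :=
  2 * (dOf β p (1,0,0,0) (0,1,0,0) * dOf β p (0,0,1,0) (0,0,0,1)
    - dOf β p (1,0,0,0) (0,0,1,0) * dOf β p (0,1,0,0) (0,0,0,1)
    + dOf β p (1,0,0,0) (0,0,0,1) * dOf β p (0,1,0,0) (0,0,1,0))

/-! Both `λ` and `λ'` have the shape `a(s) e^z dx + b(s) e^{-z} dy`, and for such a form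
`dλ ∧ dλ` evaluates to `2 (a b' + a' b)`. For `λ` and `λ'` the pair `{a, b}` is `{2 sinh, 2 cosh}`,
so in both cases the value is `8 (sinh² s + cosh² s) = 8 cosh 2s > 0`. -/

open Real

def dxdyForm (f g : P4 → ℝ) (q v : P4) : ℝ := f q * v.2.1 + g q * v.2.2.1

section

variable {f g : P4 → ℝ} {f' g' : P4 →L[ℝ] ℝ} {p : P4}

lemma dOf_dxdyForm (hf : HasFDerivAt f f' p) (hg : HasFDerivAt g g' p) (u v : P4) :
    dOf (dxdyForm f g) p u v = f' u * v.2.1 + g' u * v.2.2.1 - f' v * u.2.1 - g' v * u.2.2.1 := by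
  have hderiv (w : P4) : fderiv ℝ (fun q => dxdyForm f g q w) p = w.2.1 • f' + w.2.2.1 • g' :=
    ((hf.mul_const w.2.1).add (hg.mul_const w.2.2.1)).fderiv
  simp only [dOf, hderiv, add_apply, smul_apply, smul_eq_mul]
  ring

lemma wedgeSq_dxdyForm (hf : HasFDerivAt f f' p) (hg : HasFDerivAt g g' p) :
    wedgeSq (dxdyForm f g) p = 2 * (f' (0,0,0,1) * g' (1,0,0,0) - f' (1,0,0,0) * g' (0,0,0,1)) := by
  simp only [wedgeSq, dOf_dxdyForm hf hg]
  ring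

end

lemma wedgeSq_dxdyForm_mul_exp {a b : ℝ → ℝ} {a' b' : ℝ} {p : P4} (ha : HasDerivAt a a' p.1)
    (hb : HasDerivAt b b' p.1) :
    wedgeSq (dxdyForm (fun q => a q.1 * exp q.2.2.2) (fun q => b q.1 * exp (-q.2.2.2))) p
      = 2 * (a p.1 * b' + a' * b p.1) := by
  have hs : HasFDerivAt (fun q : P4 => q.1) _ p := hasFDerivAt_fst (𝕜 := ℝ)
  have hz : HasFDerivAt (fun q : P4 => q.2.2.2) _ p :=
    (hasFDerivAt_snd (𝕜 := ℝ) (p := p)).snd.snd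
  have hf : HasFDerivAt (fun q : P4 => a q.1 * exp q.2.2.2) _ p :=
    (ha.comp_hasFDerivAt p hs).mul hz.exp
  have hg : HasFDerivAt (fun q : P4 => b q.1 * exp (-q.2.2.2)) _ p :=
    (hb.comp_hasFDerivAt p hs).mul hz.neg.exp
  have hexp : exp p.2.2.2 * exp (-p.2.2.2) = 1 := by rw [← exp_add, add_neg_cancel, exp_zero]
  rw [wedgeSq_dxdyForm hf hg]
  simp only [Function.comp_apply, add_apply, smul_apply, neg_apply, Pi.neg_apply, smul_eq_mul,
    ContinuousLinearMap.comp_apply, ContinuousLinearMap.coe_fst', ContinuousLinearMap.coe_snd']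
  linear_combination 2 * (a p.1 * b' + a' * b p.1) * hexp

lemma lamF_eq_dxdyForm :
    lamF = dxdyForm (fun q => 2 * sinh q.1 * exp q.2.2.2) (fun q => 2 * cosh q.1 * exp (-q.2.2.2)) := by
  ext q v
  simp only [lamF, alphaP, alphaM, dxdyForm, sinh_eq, cosh_eq]
  ring

lemma lamF'_eq_dxdyForm :
    lamF' = dxdyForm (fun q => 2 * cosh q.1 * exp q.2.2.2) (fun q => 2 * sinh q.1 * exp (-q.2.2.2)) := by
  ext q v
  simp only [lamF', alphaP, alphaM, dxdyForm, sinh_eq, cosh_eq]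
  ring

lemma wedgeSq_lamF (p : P4) : wedgeSq lamF p = 8 * cosh (2 * p.1) := by
  rw [lamF_eq_dxdyForm,
    wedgeSq_dxdyForm_mul_exp ((hasDerivAt_sinh _).const_mul 2) ((hasDerivAt_cosh _).const_mul 2),
    cosh_two_mul]
  ring

lemma wedgeSq_lamF' (p : P4) : wedgeSq lamF' p = 8 * cosh (2 * p.1) := by
  rw [lamF'_eq_dxdyForm,
    wedgeSq_dxdyForm_mul_exp ((hasDerivAt_cosh _).const_mul 2) ((hasDerivAt_sinh _).const_mul 2),
    cosh_two_mul]
  ring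

theorem stmt8 :
    (∀ p : P4, wedgeSq lamF' p ≠ 0) ∧ (∀ p : P4, wedgeSq lamF p ≠ 0) :=
  ⟨fun p => by rw [wedgeSq_lamF']; positivity, fun p => by rw [wedgeSq_lamF]; positivity⟩

end
end
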